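/- For 0 < α < 1, z ∈ ℂ \ {0}, β ∈ ℂ, and γ = z^{1/α} (principal branch), the function f_1(w) = w^{α-β}/(w^α - z) - α^{-1} γ^{1-β}/(w - γ) has a removable singularity at w = γ; its limit as w → γ equals (1 + α - 2β)/(2α γ^β). -/

import Mathlib

open Complex Real Filter Topology

/-- For `f` analytic at `c`, the function `dslope f c` is analytic at `c` and its
derivative at `c` is half the second derivative of `f` at `c`. -/
lemma analyticAt_dslope_aux {f : ℂ → ℂ} {c : ℂ} (hf : AnalyticAt ℂ f c) :
    AnalyticAt ℂ (dslope f c) c ∧ deriv (dslope f c) c = deriv (deriv f) c / 2 := by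
  obtain ⟨p, hp⟩ := hf
  have hq := hp.has_fpower_series_dslope_fslope
  refine ⟨⟨_, hq⟩, ?_⟩
  have h1 : deriv (dslope f c) c = p.fslope.coeff 1 := hq.deriv
  have h2 : deriv (deriv f) c = iteratedDeriv 2 f c := by
    rw [iteratedDeriv_succ, iteratedDeriv_one]
  obtain ⟨r, hr⟩ := hp
  have h3 := hr.factorial_smul (1 : ℂ) 2
  have h4 : (p 2 fun _ => (1 : ℂ)) = p.coeff 2 := by
    simp [FormalMultilinearSeries.apply_eq_pow_smul_coeff]
  have h5 : iteratedFDeriv ℂ 2 f c (fun _ => (1 : ℂ)) = iteratedDeriv 2 f c :=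
    (iteratedDeriv_eq_iteratedFDeriv).symm
  rw [h4, h5] at h3
  rw [h1, FormalMultilinearSeries.coeff_fslope, h2, ← h3]
  simp [Nat.factorial]

lemma f1_alg_aux (a A B g b : ℂ) (ha : a ≠ 0) (hA : A ≠ 0) (hB : B ≠ 0) (hg : g ≠ 0) :
    ((a - b) * (A / B / g) - a⁻¹ * (g / B) * (a * ((a - 1) * (A / g / g))) / 2) / (a * (A / g))
      = (1 + a - 2 * b) / (2 * a * B) := by
  have h1 : a⁻¹ * (g / B) * (a * ((a - 1) * (A / g / g))) / 2 = (a - 1) * (A / B / g) / 2 := by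
    field_simp
  rw [h1, show (a - b) * (A / B / g) - (a - 1) * (A / B / g) / 2
      = (1 + a - 2 * b) / 2 * (A / B / g) by ring]
  field_simp

theorem f1_removable_singularity (α : ℝ) (hα₀ : 0 < α) (hα₁ : α < 1)
    (β : ℂ) (z : ℂ) (hz : z ≠ 0) (harg : |z.arg| < α * π)
    (γ : ℂ) (hγ : γ = z ^ ((1 : ℂ) / α)) :
    Filter.Tendsto
      (fun w : ℂ => w ^ ((α : ℂ) - β) / (w ^ (α : ℂ) - z)
        - (α : ℂ)⁻¹ * γ ^ (1 - β) / (w - γ))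
      (nhdsWithin γ {γ}ᶜ)
      (nhds ((1 + (α : ℂ) - 2 * β) / (2 * (α : ℂ) * γ ^ β))) := by
  have hαR : α ≠ 0 := hα₀.ne'
  have hαC : (α : ℂ) ≠ 0 := by exact_mod_cast hαR
  -- basic facts about γ
  have hγ0 : γ ≠ 0 := by
    rw [hγ]
    simp only [ne_eq, cpow_eq_zero_iff, not_and_or, not_not]
    exact Or.inl hz
  have hlogγ : Complex.log γ = Complex.log z * ((1 : ℂ) / α) := by
    rw [hγ, cpow_def_of_ne_zero hz]
    have him : (Complex.log z * ((1 : ℂ) / α)).im = z.arg / α := by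
      have : ((1 : ℂ) / (α : ℂ)) = ((1 / α : ℝ) : ℂ) := by push_cast; ring
      rw [this]
      simp [Complex.mul_im, Complex.log_im]
      ring
    have hlt : |z.arg / α| < π := by
      rw [abs_div, abs_of_pos hα₀, div_lt_iff₀ hα₀]
      linarith [harg]
    rw [Complex.log_exp (by rw [him]; exact (abs_lt.mp hlt).1)
      (by rw [him]; exact (abs_lt.mp hlt).2.le)]
  have hargγ : |γ.arg| < π := by
    have : γ.arg = z.arg / α := by
      rw [← Complex.log_im, hlogγ]
      have : ((1 : ℂ) / (α : ℂ)) = ((1 / α : ℝ) : ℂ) := by push_cast; ring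
      rw [this]
      simp [Complex.mul_im, Complex.log_im]
      ring
    rw [this, abs_div, abs_of_pos hα₀, div_lt_iff₀ hα₀]
    linarith [harg]
  have hγs : γ ∈ Complex.slitPlane :=
    Complex.mem_slitPlane_iff_arg.mpr ⟨by linarith [abs_lt.mp hargγ, (le_abs_self γ.arg)], hγ0⟩
  have hγα : γ ^ (α : ℂ) = z := by
    rw [cpow_def_of_ne_zero hγ0, hlogγ, mul_assoc]
    have : ((1 : ℂ) / α) * (α : ℂ) = 1 := by field_simp
    rw [this, mul_one, Complex.exp_log hz]
  -- the functions
  set F : ℂ → ℂ := fun w => w ^ ((α : ℂ) - β) with hF_def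
  set G : ℂ → ℂ := fun w => w ^ (α : ℂ) - z with hG_def
  set cst : ℂ := (α : ℂ)⁻¹ * γ ^ (1 - β) with hcst_def
  have hGa : AnalyticAt ℂ G γ :=
    ((analyticAt_id).cpow analyticAt_const hγs).sub analyticAt_const
  have hFa : AnalyticAt ℂ F γ := (analyticAt_id).cpow analyticAt_const hγs
  -- derivative of G
  have hGd : ∀ w ∈ Complex.slitPlane,
      HasDerivAt G ((α : ℂ) * w ^ ((α : ℂ) - 1)) w := by
    intro w hw
    have := ((hasDerivAt_id w).cpow_const (c := (α : ℂ)) hw).sub_const z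
    simpa [hG_def] using this
  have hderivG : deriv G γ = (α : ℂ) * γ ^ ((α : ℂ) - 1) := (hGd γ hγs).deriv
  -- second derivative of G
  have hderivG_ev : deriv G =ᶠ[nhds γ] fun w => (α : ℂ) * w ^ ((α : ℂ) - 1) := by
    filter_upwards [Complex.isOpen_slitPlane.mem_nhds hγs] with w hw
    exact (hGd w hw).deriv
  have hG2 : deriv (deriv G) γ = (α : ℂ) * (((α : ℂ) - 1) * γ ^ ((α : ℂ) - 1 - 1)) := by
    rw [hderivG_ev.deriv_eq]
    have : HasDerivAt (fun w : ℂ => (α : ℂ) * w ^ ((α : ℂ) - 1))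
        ((α : ℂ) * (((α : ℂ) - 1) * γ ^ ((α : ℂ) - 1 - 1) * 1)) γ :=
      ((hasDerivAt_id γ).cpow_const (c := (α : ℂ) - 1) hγs).const_mul _
    simpa using this.deriv
  -- the dslope of G at γ
  set h : ℂ → ℂ := dslope G γ with hh_def
  obtain ⟨hha, hhd⟩ := analyticAt_dslope_aux hGa
  have hhγ : h γ = (α : ℂ) * γ ^ ((α : ℂ) - 1) := by
    rw [hh_def, dslope_same, hderivG]
  have hhγ0 : h γ ≠ 0 := by
    rw [hhγ]
    exact mul_ne_zero hαC (by simp [cpow_eq_zero_iff, hγ0])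
  have hhd' : deriv h γ = (α : ℂ) * (((α : ℂ) - 1) * γ ^ ((α : ℂ) - 1 - 1)) / 2 := by
    rw [hhd, hG2]
  -- ψ := F - cst * h
  set ψ : ℂ → ℂ := fun w => F w - cst * h w with hψ_def
  have hFd : HasDerivAt F (((α : ℂ) - β) * γ ^ ((α : ℂ) - β - 1)) γ := by
    have := (hasDerivAt_id γ).cpow_const (c := (α : ℂ) - β) hγs
    simpa using this
  have hψd : HasDerivAt ψ
      (((α : ℂ) - β) * γ ^ ((α : ℂ) - β - 1)
        - cst * ((α : ℂ) * (((α : ℂ) - 1) * γ ^ ((α : ℂ) - 1 - 1)) / 2)) γ := by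
    have h2 : HasDerivAt h (deriv h γ) γ := hha.differentiableAt.hasDerivAt
    rw [hhd'] at h2
    exact hFd.sub (h2.const_mul cst)
  have hψγ : ψ γ = 0 := by
    rw [hψ_def]
    simp only [hcst_def, hhγ, hF_def]
    rw [show (α : ℂ) - β = α - β by ring, cpow_sub _ _ hγ0, cpow_sub _ _ hγ0,
      cpow_sub _ _ hγ0, cpow_one]
    have hA : γ ^ (α : ℂ) ≠ 0 := by simp [cpow_eq_zero_iff, hγ0]
    have hB : γ ^ β ≠ 0 := by simp [cpow_eq_zero_iff, hγ0]
    field_simp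
    ring
  -- eventual equality on the punctured neighbourhood
  have hev : ∀ᶠ w in nhdsWithin γ {γ}ᶜ,
      F w / (w ^ (α : ℂ) - z) - cst / (w - γ) = slope ψ γ w / h w := by
    have hne : ∀ᶠ w in nhdsWithin γ {γ}ᶜ, h w ≠ 0 :=
      nhdsWithin_le_nhds (hha.continuousAt.eventually_ne hhγ0)
    filter_upwards [hne, self_mem_nhdsWithin] with w hw hwγ
    have hwγ' : w - γ ≠ 0 := sub_ne_zero.mpr hwγ
    have hGw : w ^ (α : ℂ) - z = (w - γ) * h w := by
      have : h w = (G w - G γ) / (w - γ) := by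
        rw [hh_def, dslope_of_ne _ hwγ, slope_def_field]
      rw [this]
      have hGγ : G γ = 0 := by simp [hG_def, hγα]
      field_simp [hG_def]
      simp [hG_def, hγα]
    rw [hGw, slope_def_field, hψγ, sub_zero, hψ_def]
    field_simp
  -- the limit
  have hslope : Filter.Tendsto (slope ψ γ) (nhdsWithin γ {γ}ᶜ)
      (nhds (((α : ℂ) - β) * γ ^ ((α : ℂ) - β - 1)
        - cst * ((α : ℂ) * (((α : ℂ) - 1) * γ ^ ((α : ℂ) - 1 - 1)) / 2))) :=
    hasDerivAt_iff_tendsto_slope.mp hψd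
  have hht : Filter.Tendsto h (nhdsWithin γ {γ}ᶜ) (nhds (h γ)) :=
    (hha.continuousAt.continuousWithinAt).tendsto
  have hmain : Filter.Tendsto (fun w => slope ψ γ w / h w) (nhdsWithin γ {γ}ᶜ)
      (nhds ((((α : ℂ) - β) * γ ^ ((α : ℂ) - β - 1)
        - cst * ((α : ℂ) * (((α : ℂ) - 1) * γ ^ ((α : ℂ) - 1 - 1)) / 2)) / h γ)) :=
    hslope.div hht hhγ0
  have hval : (((α : ℂ) - β) * γ ^ ((α : ℂ) - β - 1)
      - cst * ((α : ℂ) * (((α : ℂ) - 1) * γ ^ ((α : ℂ) - 1 - 1)) / 2)) / h γ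
      = (1 + (α : ℂ) - 2 * β) / (2 * (α : ℂ) * γ ^ β) := by
    rw [hhγ, hcst_def]
    rw [show (α : ℂ) - β - 1 = α - β - 1 by ring]
    rw [cpow_sub _ _ hγ0, cpow_sub _ _ hγ0, cpow_sub _ _ hγ0, cpow_sub _ _ hγ0,
      cpow_sub _ _ hγ0, cpow_one]
    have hA : γ ^ (α : ℂ) ≠ 0 := by simp [cpow_eq_zero_iff, hγ0]
    have hB : γ ^ β ≠ 0 := by simp [cpow_eq_zero_iff, hγ0]
    linear_combination f1_alg_aux (α : ℂ) (γ ^ (α : ℂ)) (γ ^ β) γ β hαC hA hB hγ0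
  rw [← hval]
  exact hmain.congr' (by filter_upwards [hev] with w hw using hw.symm)
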